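/- arXiv:2406.17356 — 2 statements merged into one kernel-verified Lean document; each statement's English description precedes it below -/
import Mathlib

section
/- Let ρ : ℝ³ → ℝ be a C¹ function with ρ(x) > 0 for all x, and let B : ℝ³ → ℝ³ be a C³ vector field with compact support. Define B* := B + curl((curl B)/ρ), i.e. B*(x) = B(x) + curl(x ↦ ρ(x)⁻¹·curl B(x))(x). Then ∫_{ℝ³} B(x) · B*(x) dx = ∫_{ℝ³} (‖B(x)‖² + ρ(x)⁻¹·‖curl B(x)‖²) dx. -/
noncomputable section

open MeasureTheory Real

/-- Euclidean 3-space. -/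
abbrev E3 : Type := EuclideanSpace ℝ (Fin 3)

/-- Build a vector in `E3` from three coordinates. -/
def mk3 (a b c : ℝ) : E3 := (WithLp.equiv 2 (Fin 3 → ℝ)).symm ![a, b, c]

/-- Partial derivative in the `i`-th coordinate direction. -/
def pd (i : Fin 3) (f : E3 → ℝ) (x : E3) : ℝ :=
  fderiv ℝ f x (EuclideanSpace.single i 1)

/-- Curl of a vector field on `ℝ³`. -/
def ecurl (f : E3 → E3) (x : E3) : E3 :=
  mk3 (pd 1 (fun y => f y 2) x - pd 2 (fun y => f y 1) x)
      (pd 2 (fun y => f y 0) x - pd 0 (fun y => f y 2) x)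
      (pd 0 (fun y => f y 1) x - pd 1 (fun y => f y 0) x)

/-- Divergence of a vector field on `ℝ³`. -/
def ediv (f : E3 → E3) (x : E3) : ℝ :=
  pd 0 (fun y => f y 0) x + pd 1 (fun y => f y 1) x + pd 2 (fun y => f y 2) x

/-- Gradient of a scalar field on `ℝ³`. -/
def egrad (h : E3 → ℝ) (x : E3) : E3 :=
  mk3 (pd 0 h x) (pd 1 h x) (pd 2 h x)

/-- Cross product on `ℝ³`. -/
def cross3 (u w : E3) : E3 :=
  mk3 (u 1 * w 2 - u 2 * w 1) (u 2 * w 0 - u 0 * w 2) (u 0 * w 1 - u 1 * w 0)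

/-- Advection `(g · ∇) f` of a vector field `f` along the vector `g`. -/
def advect (g : E3) (f : E3 → E3) (x : E3) : E3 :=
  mk3 (∑ j, g j * pd j (fun y => f y 0) x)
      (∑ j, g j * pd j (fun y => f y 1) x)
      (∑ j, g j * pd j (fun y => f y 2) x)

/-- Componentwise Laplacian of a vector field on `ℝ³`. -/
def elap (f : E3 → E3) (x : E3) : E3 :=
  mk3 (∑ i, pd i (fun y => pd i (fun z => f z 0) y) x)
      (∑ i, pd i (fun y => pd i (fun z => f z 1) y) x)
      (∑ i, pd i (fun y => pd i (fun z => f z 2) y) x)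

/-- Time derivative of a time-dependent vector field. -/
def tderiv (f : ℝ → E3 → E3) (t : ℝ) (x : E3) : E3 :=
  deriv (fun s => f s x) t

/-!
With `F = ρ⁻¹ curl B`, the identity `div (F × B) = B · curl F - F · curl B` gives pointwise
`B · B* = ‖B‖² + ρ⁻¹ ‖curl B‖² + div (F × B)`, and the divergence of a compactly supported
`C¹` field integrates to zero: integrate `∂ᵢ h` against the constant `1` by parts.
-/

@[simp] lemma mk3_apply_zero (a b c : ℝ) : mk3 a b c 0 = a := rfl
@[simp] lemma mk3_apply_one (a b c : ℝ) : mk3 a b c 1 = b := rfl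
@[simp] lemma mk3_apply_two (a b c : ℝ) : mk3 a b c 2 = c := rfl
@[simp] lemma mk3_zero : mk3 0 0 0 = 0 := by ext i; fin_cases i <;> rfl

lemma contDiff_mk3 {n : WithTop ℕ∞} {a b c : E3 → ℝ} (ha : ContDiff ℝ n a)
    (hb : ContDiff ℝ n b) (hc : ContDiff ℝ n c) : ContDiff ℝ n fun x => mk3 (a x) (b x) (c x) := by
  refine contDiff_euclidean.2 fun i => ?_
  fin_cases i
  exacts [ha, hb, hc]

lemma inner_E3 (u v : E3) : (inner ℝ u v : ℝ) = u 0 * v 0 + u 1 * v 1 + u 2 * v 2 := by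
  simp only [PiLp.inner_apply, RCLike.inner_apply, conj_trivial, Fin.sum_univ_three]
  ring

section PartialDerivative

variable {f g : E3 → ℝ} {x : E3}

lemma pd_mul (hf : DifferentiableAt ℝ f x) (hg : DifferentiableAt ℝ g x) (i : Fin 3) :
    pd i (fun y => f y * g y) x = f x * pd i g x + pd i f x * g x := by
  simp only [pd, fderiv_fun_mul hf hg, add_apply, smul_apply, smul_eq_mul]
  ring

lemma pd_sub (hf : DifferentiableAt ℝ f x) (hg : DifferentiableAt ℝ g x) (i : Fin 3) :
    pd i (fun y => f y - g y) x = pd i f x - pd i g x := by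
  simp only [pd, fderiv_fun_sub hf hg, sub_apply]

lemma pd_of_notMem_tsupport (h : x ∉ tsupport f) (i : Fin 3) : pd i f x = 0 := by
  simp only [pd, fderiv_of_notMem_tsupport ℝ h, zero_apply]

lemma continuous_pd (hf : ContDiff ℝ 1 f) (i : Fin 3) : Continuous (pd i f) :=
  (hf.continuous_fderiv one_ne_zero).clm_apply continuous_const

lemma contDiff_pd {n : ℕ} (hf : ContDiff ℝ (n + 1) f) (i : Fin 3) : ContDiff ℝ n (pd i f) :=
  (hf.fderiv_right (m := n) le_rfl).clm_apply contDiff_const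

lemma HasCompactSupport.pd (hf : HasCompactSupport f) (i : Fin 3) :
    HasCompactSupport (pd i f) :=
  hf.fderiv_apply ℝ _

lemma integrable_pd (hf : ContDiff ℝ 1 f) (hfs : HasCompactSupport f) (i : Fin 3) :
    Integrable (pd i f) :=
  (continuous_pd hf i).integrable_of_hasCompactSupport (hfs.pd i)

lemma integral_pd_eq_zero (hf : ContDiff ℝ 1 f) (hfs : HasCompactSupport f) (i : Fin 3) :
    ∫ x, pd i f x = 0 := by
  have h := integral_mul_fderiv_eq_neg_fderiv_mul_of_integrable (μ := volume)
    (f := fun _ => (1 : ℝ)) (g := f) (v := EuclideanSpace.single i 1) (by simp)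
    (by simp only [one_mul]; exact integrable_pd hf hfs i)
    (by simpa using hf.continuous.integrable_of_hasCompactSupport hfs)
    (fun _ _ => differentiableAt_const _) (fun x _ => hf.differentiable one_ne_zero x)
  simpa [pd] using h

end PartialDerivative

section VectorCalculus

variable {F G : E3 → E3}

lemma ecurl_of_notMem_tsupport {x : E3} (h : x ∉ tsupport F) : ecurl F x = 0 := by
  have hk (k : Fin 3) (i : Fin 3) : pd i (fun y => F y k) x = 0 :=
    pd_of_notMem_tsupport (fun hx => h (tsupport_comp_subset (g := (· k)) rfl F hx)) i
  ext k
  fin_cases k <;> simp [ecurl, hk]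

lemma contDiff_ecurl {n : ℕ} (hF : ContDiff ℝ (n + 1) F) : ContDiff ℝ n (ecurl F) := by
  have h (k i : Fin 3) : ContDiff ℝ n (pd i fun y => F y k) :=
    contDiff_pd (contDiff_euclidean.1 hF k) i
  exact contDiff_mk3 ((h 2 1).sub (h 1 2)) ((h 0 2).sub (h 2 0)) ((h 1 0).sub (h 0 1))

lemma ContDiff.cross3 {n : WithTop ℕ∞} (hF : ContDiff ℝ n F) (hG : ContDiff ℝ n G) :
    ContDiff ℝ n fun x => cross3 (F x) (G x) := by
  have hF' := contDiff_euclidean.1 hF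
  have hG' := contDiff_euclidean.1 hG
  exact contDiff_mk3 (((hF' 1).mul (hG' 2)).sub ((hF' 2).mul (hG' 1)))
    (((hF' 2).mul (hG' 0)).sub ((hF' 0).mul (hG' 2)))
    (((hF' 0).mul (hG' 1)).sub ((hF' 1).mul (hG' 0)))

lemma HasCompactSupport.cross3 (hG : HasCompactSupport G) (F : E3 → E3) :
    HasCompactSupport fun x => cross3 (F x) (G x) :=
  hG.mono fun x hx => by_contra fun h => hx (by simp [_root_.cross3, Function.notMem_support.1 h])

lemma ediv_cross3 {x : E3} (hF : Differentiable ℝ F) (hG : Differentiable ℝ G) :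
    ediv (fun y => cross3 (F y) (G y)) x
      = inner ℝ (G x) (ecurl F x) - inner ℝ (F x) (ecurl G x) := by
  have hF' (k : Fin 3) : DifferentiableAt ℝ (fun y => F y k) x :=
    (differentiable_euclidean.1 hF k) x
  have hG' (k : Fin 3) : DifferentiableAt ℝ (fun y => G y k) x :=
    (differentiable_euclidean.1 hG k) x
  simp only [ediv, _root_.cross3, mk3_apply_zero, mk3_apply_one, mk3_apply_two]
  rw [pd_sub ((hF' 1).fun_mul (hG' 2)) ((hF' 2).fun_mul (hG' 1)),
    pd_sub ((hF' 2).fun_mul (hG' 0)) ((hF' 0).fun_mul (hG' 2)),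
    pd_sub ((hF' 0).fun_mul (hG' 1)) ((hF' 1).fun_mul (hG' 0))]
  simp only [pd_mul (hF' _) (hG' _), inner_E3, _root_.ecurl, mk3_apply_zero, mk3_apply_one,
    mk3_apply_two]
  ring

lemma HasCompactSupport.apply_coord (hF : HasCompactSupport F) (k : Fin 3) :
    HasCompactSupport fun y => F y k :=
  hF.comp_left (g := fun v : E3 => v k) rfl

lemma integrable_ediv (hF : ContDiff ℝ 1 F) (hFs : HasCompactSupport F) :
    Integrable (ediv F) :=
  have hF' := contDiff_euclidean.1 hF
  have hFs' := hFs.apply_coord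
  ((integrable_pd (hF' 0) (hFs' 0) 0).add (integrable_pd (hF' 1) (hFs' 1) 1)).add
    (integrable_pd (hF' 2) (hFs' 2) 2)

lemma integral_ediv_eq_zero (hF : ContDiff ℝ 1 F) (hFs : HasCompactSupport F) :
    ∫ x, ediv F x = 0 := by
  have hF' := contDiff_euclidean.1 hF
  have hFs' := hFs.apply_coord
  have hint (k : Fin 3) := integrable_pd (hF' k) (hFs' k) k
  simp only [ediv]
  rw [integral_add ((hint 0).fun_add (hint 1)) (hint 2), integral_add (hint 0) (hint 1),
    integral_pd_eq_zero (hF' 0) (hFs' 0), integral_pd_eq_zero (hF' 1) (hFs' 1),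
    integral_pd_eq_zero (hF' 2) (hFs' 2)]
  norm_num

end VectorCalculus

/-- For the compressible constitutive relation `B* = B + curl((curl B)/ρ)`,
one has `∫ B · B* = ∫ (‖B‖² + ρ⁻¹ ‖curl B‖²)`. -/
theorem integral_B_dot_Bstar
    (ρ : E3 → ℝ) (hρ : ContDiff ℝ 1 ρ) (hρpos : ∀ x, 0 < ρ x)
    (B : E3 → E3) (hB : ContDiff ℝ 3 B) (hsupp : HasCompactSupport B)
    (Bs : E3 → E3)
    (hBs : ∀ x, Bs x = B x + ecurl (fun y => (ρ y)⁻¹ • ecurl B y) x) :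
    (∫ x : E3, (inner ℝ (B x) (Bs x) : ℝ))
      = ∫ x : E3, (‖B x‖^2 + (ρ x)⁻¹ * ‖ecurl B x‖^2) := by
  set F : E3 → E3 := fun y => (ρ y)⁻¹ • ecurl B y
  have hB1 : ContDiff ℝ 1 B := hB.of_le (by norm_num)
  have hcurlB : ContDiff ℝ 1 (ecurl B) := contDiff_ecurl (n := 1) (hB.of_le (by norm_num))
  have hρinv : ContDiff ℝ 1 fun x => (ρ x)⁻¹ := hρ.inv fun x => (hρpos x).ne'
  have hF : ContDiff ℝ 1 F := hρinv.smul hcurlB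
  have hpointwise (x : E3) : inner ℝ (B x) (Bs x)
      = (‖B x‖^2 + (ρ x)⁻¹ * ‖ecurl B x‖^2) + ediv (fun y => cross3 (F y) (B y)) x := by
    rw [hBs, ediv_cross3 (hF.differentiable one_ne_zero) (hB1.differentiable one_ne_zero),
      inner_add_right, real_inner_self_eq_norm_sq, real_inner_smul_left,
      real_inner_self_eq_norm_sq]
    ring
  have henergy : Integrable fun x => ‖B x‖^2 + (ρ x)⁻¹ * ‖ecurl B x‖^2 := by
    refine ((hB1.continuous.norm.pow 2).add (hρinv.continuous.mul
      (hcurlB.continuous.norm.pow 2))).integrable_of_hasCompactSupport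
      (hsupp.mono' (Function.support_subset_iff'.2 fun x hx => ?_))
    simp [image_eq_zero_of_notMem_tsupport hx, ecurl_of_notMem_tsupport hx]
  have hcross : ContDiff ℝ 1 fun y => cross3 (F y) (B y) := hF.cross3 hB1
  rw [integral_congr_ae (.of_forall hpointwise), integral_add henergy
    (integrable_ediv hcross (hsupp.cross3 F)), integral_ediv_eq_zero hcross (hsupp.cross3 F),
    add_zero]
end
end

section
/- Let k ∈ ℝ³ with κ := ‖k‖ > 0, Z ∈ ℝ³ with ⟨k, Z⟩ = 0, and let Z_k(x) := cos(⟨k, x⟩)·Z + κ⁻¹·sin(⟨k, x⟩)·(Z × k). Let d_e > 0 and d_i ≥ 0. Define v := Z_k, B* := Z_k, B := (1 + d_e²·κ²)⁻¹·Z_k, and p := −‖Z_k‖²/2. Then this is a stationary solution of incompressible extended MHD: (a) B* = B + d_e²·curl(curl B); (b) (v·∇)v + ∇p + B* × (curl B) = 0; (c) curl(B* × (v − d_i·curl B)) + d_e²·curl((curl v) × (curl B)) = 0; (d) div v = div B* = div B = 0. -/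
noncomputable section

open MeasureTheory Real

lemma E3.ext {u w : E3} (h₀ : u 0 = w 0) (h₁ : u 1 = w 1) (h₂ : u 2 = w 2) : u = w := by
  ext i; fin_cases i <;> assumption

lemma inner_eq_sum_three (u w : E3) : inner ℝ u w = u 0 * w 0 + u 1 * w 1 + u 2 * w 2 := by
  simp [PiLp.inner_apply, Fin.sum_univ_three, mul_comm]

lemma norm_sq_eq_sum_three (u : E3) : ‖u‖ ^ 2 = u 0 ^ 2 + u 1 ^ 2 + u 2 ^ 2 := by
  rw [← real_inner_self_eq_norm_sq, inner_eq_sum_three]; ring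

lemma cross3_anticomm (u w : E3) : cross3 u w = -cross3 w u :=
  E3.ext (by simp [cross3]; ring) (by simp [cross3]; ring) (by simp [cross3]; ring)

lemma cross3_add_right (u w w' : E3) : cross3 u (w + w') = cross3 u w + cross3 u w' :=
  E3.ext (by simp [cross3]; ring) (by simp [cross3]; ring) (by simp [cross3]; ring)

lemma cross3_smul_right (a : ℝ) (u w : E3) : cross3 u (a • w) = a • cross3 u w :=
  E3.ext (by simp [cross3]; ring) (by simp [cross3]; ring) (by simp [cross3]; ring)

lemma cross3_smul_left (a : ℝ) (u w : E3) : cross3 (a • u) w = a • cross3 u w :=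
  E3.ext (by simp [cross3]; ring) (by simp [cross3]; ring) (by simp [cross3]; ring)

lemma cross3_self (u : E3) : cross3 u u = 0 :=
  E3.ext (by simp [cross3]; ring) (by simp [cross3]; ring) (by simp [cross3]; ring)

lemma inner_cross3_self_left (u w : E3) : inner ℝ u (cross3 u w) = 0 := by
  simp [inner_eq_sum_three, cross3]; ring

lemma inner_cross3_self_right (u w : E3) : inner ℝ w (cross3 u w) = 0 := by
  simp [inner_eq_sum_three, cross3]; ring

lemma cross3_cross3_self_right (u w : E3) :
    cross3 w (cross3 u w) = ‖w‖ ^ 2 • u - inner ℝ w u • w := by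
  refine E3.ext ?_ ?_ ?_ <;> simp [norm_sq_eq_sum_three, inner_eq_sum_three, cross3] <;> ring

lemma norm_cross3_sq (u w : E3) : ‖cross3 u w‖ ^ 2 = ‖u‖ ^ 2 * ‖w‖ ^ 2 - inner ℝ u w ^ 2 := by
  simp [norm_sq_eq_sum_three, inner_eq_sum_three, cross3]; ring

lemma pd_const (c : ℝ) (j : Fin 3) (x : E3) : pd j (fun _ => c) x = 0 := by simp [pd]

lemma pd_const_mul (a : ℝ) (f : E3 → ℝ) (j : Fin 3) (x : E3) :
    pd j (fun y => a * f y) x = a * pd j f x := by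
  simp only [pd]
  rw [show (fun y => a * f y) = a • f from rfl, fderiv_const_smul_field]
  rfl

lemma ecurl_const (c : E3) (x : E3) : ecurl (fun _ => c) x = 0 :=
  E3.ext (by simp [ecurl, pd_const]) (by simp [ecurl, pd_const]) (by simp [ecurl, pd_const])

lemma egrad_const (c : ℝ) (x : E3) : egrad (fun _ => c) x = 0 :=
  E3.ext (by simp [egrad, pd_const]) (by simp [egrad, pd_const]) (by simp [egrad, pd_const])

lemma ecurl_const_smul (a : ℝ) (f : E3 → E3) (x : E3) :
    ecurl (fun y => a • f y) x = a • ecurl f x := by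
  refine E3.ext ?_ ?_ ?_ <;> simp [ecurl, pd_const_mul, mul_sub]

lemma ediv_const_smul (a : ℝ) (f : E3 → E3) (x : E3) :
    ediv (fun y => a • f y) x = a * ediv f x := by
  simp [ediv, pd_const_mul, mul_add]

section PlaneWave

variable {F F' : ℝ → E3} (hF : ∀ t, HasDerivAt F (F' t) t) (k : E3)
include hF

lemma pd_planeWave (i j : Fin 3) (x : E3) :
    pd j (fun y => F (inner ℝ k y) i) x = k j * F' (inner ℝ k x) i := by
  have hFi : HasDerivAt (fun t => F t i) (F' (inner ℝ k x) i) (inner ℝ k x) :=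
    (EuclideanSpace.proj i : E3 →L[ℝ] ℝ).hasFDerivAt.comp_hasDerivAt _ (hF _)
  have h : HasFDerivAt (fun y => F (inner ℝ k y) i)
      (F' (inner ℝ k x) i • innerSL ℝ k) x :=
    hFi.comp_hasFDerivAt x (innerSL ℝ k).hasFDerivAt
  simp [pd, h.fderiv, EuclideanSpace.inner_single_right, mul_comm]

lemma ecurl_planeWave (x : E3) :
    ecurl (fun y => F (inner ℝ k y)) x = cross3 k (F' (inner ℝ k x)) := by
  refine E3.ext ?_ ?_ ?_ <;> simp [ecurl, cross3, pd_planeWave hF]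

lemma ediv_planeWave (x : E3) :
    ediv (fun y => F (inner ℝ k y)) x = inner ℝ k (F' (inner ℝ k x)) := by
  simp only [ediv, pd_planeWave hF, inner_eq_sum_three k (F' _)]

lemma advect_planeWave (u x : E3) :
    advect u (fun y => F (inner ℝ k y)) x = inner ℝ u k • F' (inner ℝ k x) := by
  refine E3.ext ?_ ?_ ?_ <;>
    simp [advect, Fin.sum_univ_three, pd_planeWave hF, inner_eq_sum_three u k] <;> ring

end PlaneWave

def beltramiProfile (k Z : E3) (t : ℝ) : E3 :=
  cos t • Z + (‖k‖⁻¹ * sin t) • cross3 Z k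

def beltramiProfileDeriv (k Z : E3) (t : ℝ) : E3 :=
  (-sin t) • Z + (‖k‖⁻¹ * cos t) • cross3 Z k

def beltramiField (k Z : E3) (x : E3) : E3 :=
  beltramiProfile k Z (inner ℝ k x)

lemma hasDerivAt_beltramiProfile (k Z : E3) (t : ℝ) :
    HasDerivAt (beltramiProfile k Z) (beltramiProfileDeriv k Z t) t :=
  ((hasDerivAt_cos t).smul_const Z).add
    (((hasDerivAt_sin t).const_mul ‖k‖⁻¹).smul_const (cross3 Z k))

section Beltrami

variable {k Z : E3} (hkZ : inner ℝ k Z = 0)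
include hkZ

lemma inner_beltramiProfile_left (t : ℝ) : inner ℝ (beltramiProfile k Z t) k = 0 := by
  rw [real_inner_comm]
  simp [beltramiProfile, inner_add_right, real_inner_smul_right, hkZ, inner_cross3_self_right]

lemma inner_beltramiProfileDeriv_right (t : ℝ) : inner ℝ k (beltramiProfileDeriv k Z t) = 0 := by
  simp [beltramiProfileDeriv, inner_add_right, real_inner_smul_right, hkZ,
    inner_cross3_self_right]

lemma cross3_beltramiProfileDeriv (hk : k ≠ 0) (t : ℝ) :
    cross3 k (beltramiProfileDeriv k Z t) = ‖k‖ • beltramiProfile k Z t := by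
  have hκ : ‖k‖ ≠ 0 := norm_ne_zero_iff.mpr hk
  rw [beltramiProfileDeriv, beltramiProfile, cross3_add_right, cross3_smul_right,
    cross3_smul_right, cross3_anticomm k Z, cross3_cross3_self_right, hkZ,
    zero_smul, sub_zero]
  match_scalars <;> field_simp

lemma norm_beltramiProfile (hk : k ≠ 0) (t : ℝ) : ‖beltramiProfile k Z t‖ = ‖Z‖ := by
  have hκ : ‖k‖ ≠ 0 := norm_ne_zero_iff.mpr hk
  have hZk : ‖cross3 Z k‖ ^ 2 = ‖Z‖ ^ 2 * ‖k‖ ^ 2 := by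
    rw [norm_cross3_sq, real_inner_comm, hkZ]; ring
  refine (sq_eq_sq₀ (norm_nonneg _) (norm_nonneg _)).mp ?_
  rw [beltramiProfile, norm_add_sq_real, real_inner_smul_left, real_inner_smul_right,
    inner_cross3_self_left, norm_smul, norm_smul, mul_pow, mul_pow, hZk]
  simp only [norm_eq_abs, sq_abs, mul_zero, add_zero]
  field_simp
  linear_combination ‖Z‖ ^ 2 * sin_sq_add_cos_sq t

lemma ecurl_beltramiField (hk : k ≠ 0) (x : E3) :
    ecurl (beltramiField k Z) x = ‖k‖ • beltramiField k Z x :=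
  (ecurl_planeWave (hasDerivAt_beltramiProfile k Z) k x).trans
    (cross3_beltramiProfileDeriv hkZ hk _)

lemma ediv_beltramiField (x : E3) : ediv (beltramiField k Z) x = 0 :=
  (ediv_planeWave (hasDerivAt_beltramiProfile k Z) k x).trans
    (inner_beltramiProfileDeriv_right hkZ _)

lemma advect_beltramiField (x : E3) :
    advect (beltramiField k Z x) (beltramiField k Z) x = 0 :=
  (advect_planeWave (hasDerivAt_beltramiProfile k Z) k _ x).trans <| by
    rw [beltramiField, inner_beltramiProfile_left hkZ, zero_smul]

end Beltrami

theorem beltrami_stationary_solution_general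
    (k Z : E3) (hk : 0 < ‖k‖) (hkZ : (inner ℝ k Z : ℝ) = 0)
    (de di : ℝ)
    (Zk : E3 → E3)
    (hZk : ∀ x, Zk x = Real.cos (inner ℝ k x : ℝ) • Z
        + (‖k‖⁻¹ * Real.sin (inner ℝ k x : ℝ)) • cross3 Z k)
    (v Bs B : E3 → E3) (p : E3 → ℝ)
    (hv : ∀ x, v x = Zk x) (hBs : ∀ x, Bs x = Zk x)
    (hB : ∀ x, B x = (1 + de^2 * ‖k‖^2)⁻¹ • Zk x)
    (hp : ∀ x, p x = -(‖Zk x‖^2) / 2) :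
    (∀ x, Bs x = B x + de^2 • ecurl (ecurl B) x) ∧
    (∀ x, advect (v x) v x + egrad p x + cross3 (Bs x) (ecurl B x) = 0) ∧
    (∀ x, ecurl (fun y => cross3 (Bs y) (v y - di • ecurl B y)) x
        + de^2 • ecurl (fun y => cross3 (ecurl v y) (ecurl B y)) x = 0) ∧
    (∀ x, ediv v x = 0) ∧ (∀ x, ediv Bs x = 0) ∧ (∀ x, ediv B x = 0) := by
  have hk₀ : k ≠ 0 := norm_pos_iff.mp hk
  obtain rfl : Zk = beltramiField k Z := funext hZk
  obtain rfl : v = beltramiField k Z := funext hv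
  obtain rfl : Bs = beltramiField k Z := funext hBs
  obtain rfl : p = fun _ => -‖Z‖ ^ 2 / 2 :=
    funext fun x => by rw [hp, beltramiField, norm_beltramiProfile hkZ hk₀]
  set c := (1 + de ^ 2 * ‖k‖ ^ 2)⁻¹ with hc
  obtain rfl : B = fun x => c • beltramiField k Z x := funext hB
  have hBeltrami := ecurl_beltramiField hkZ hk₀
  have hcurlB :
      ecurl (fun x => c • beltramiField k Z x) = fun x => (c * ‖k‖) • beltramiField k Z x :=
    funext fun x => by rw [ecurl_const_smul, hBeltrami, smul_smul]
  refine ⟨fun x => ?_, fun x => ?_, fun x => ?_, ediv_beltramiField hkZ, ediv_beltramiField hkZ,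
    fun x => ?_⟩
  · have hc₁ : c + de ^ 2 * (c * ‖k‖) * ‖k‖ = 1 := by rw [hc]; field_simp
    rw [hcurlB, ecurl_const_smul, hBeltrami, smul_smul, smul_smul, ← add_smul, hc₁, one_smul]
  · rw [advect_beltramiField hkZ, egrad_const, hcurlB, zero_add, zero_add, cross3_smul_right,
      cross3_self, smul_zero]
  · have hsub : ∀ y, beltramiField k Z y - di • (c * ‖k‖) • beltramiField k Z y
        = (1 - di * (c * ‖k‖)) • beltramiField k Z y := fun y => by module
    simp only [hcurlB, hBeltrami, hsub, cross3_smul_left, cross3_smul_right, cross3_self, smul_zero,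
      ecurl_const, add_zero]
  · rw [ediv_const_smul, ediv_beltramiField hkZ, mul_zero]

/-- The Beltrami field gives a stationary solution of incompressible
extended MHD: with `v = B* = Z_k`, `B = (1 + d_e²‖k‖²)⁻¹ Z_k` and `p = −‖Z_k‖²/2`, the
constitutive relation, the (stationary) momentum and induction equations, and the
divergence-free conditions all hold. -/
theorem beltrami_stationary_solution
    (k Z : E3) (hk : 0 < ‖k‖) (hkZ : (inner ℝ k Z : ℝ) = 0)
    (de di : ℝ) (hde : 0 < de) (hdi : 0 ≤ di)
    (Zk : E3 → E3)
    (hZk : ∀ x, Zk x = Real.cos (inner ℝ k x : ℝ) • Z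
        + (‖k‖⁻¹ * Real.sin (inner ℝ k x : ℝ)) • cross3 Z k)
    (v Bs B : E3 → E3) (p : E3 → ℝ)
    (hv : ∀ x, v x = Zk x) (hBs : ∀ x, Bs x = Zk x)
    (hB : ∀ x, B x = (1 + de^2 * ‖k‖^2)⁻¹ • Zk x)
    (hp : ∀ x, p x = -(‖Zk x‖^2) / 2) :
    (∀ x, Bs x = B x + de^2 • ecurl (ecurl B) x) ∧
    (∀ x, advect (v x) v x + egrad p x + cross3 (Bs x) (ecurl B x) = 0) ∧
    (∀ x, ecurl (fun y => cross3 (Bs y) (v y - di • ecurl B y)) x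
        + de^2 • ecurl (fun y => cross3 (ecurl v y) (ecurl B y)) x = 0) ∧
    (∀ x, ediv v x = 0) ∧ (∀ x, ediv Bs x = 0) ∧ (∀ x, ediv B x = 0) :=
  beltrami_stationary_solution_general k Z hk hkZ de di Zk hZk v Bs B p hv hBs hB hp
end
end
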